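/- Let L, N, R ≥ 0 and Δ > 0, and let D_Δ be any causal sample-based differentiator with sampling period Δ. Then for every k ∈ ℕ with k ≥ 1 and every ε > 0, there exists f ∈ F_L^0 (hence f ∈ F_L^R) such that, feeding D_Δ the noise-free samples (f(jΔ))_{j∈ℕ}, there is an index ℓ ≥ k with |ḟ(ℓΔ) − [D_Δ f](ℓΔ)| ≥ (1 − ε)·L·Δ/2. Consequently, the worst-case error of D_Δ from time kΔ over F_L^R with any noise bound N satisfies M_N^{L,R}(kΔ) ≥ L·Δ/2. -/

import Mathlib

/-!
Causality makes the differentiator blind to what the samples do not show: if `f ∈ F_L^0`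
vanishes at every sampling instant, `D` returns the same output on `f` and on `-f`, so on
one of the two its error at `ℓΔ` is at least `|ḟ(ℓΔ)|`.

Such an `f` with `|ḟ(ℓΔ)|` close to `LΔ/2` comes from the triangle wave `Δ/2 - dist(t, 2Δℤ)`.
It is `Δ`-antiperiodic with zero mean over `[0, Δ]`, so its primitive `W` vanishes on `Δℕ`,
while `|Ẇ(jΔ)| = Δ/2`. Because `Ẇ(0) ≠ 0`, `W` is multiplied by the slow ramp
`1 - exp(-(σt)²)`; this inflates the Lipschitz constant of the derivative only by the factor
`1 + σΔ + 2(σΔ)²`, and the ramp tends to `1` along the samples.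
-/

open Set Filter Topology

/-- `f ∈ F_L`: `f : [0,∞) → ℝ` is differentiable with derivative `f'`
that is Lipschitz continuous with constant `L` on `[0,∞)`. -/
def IsFL (L : ℝ) (f f' : ℝ → ℝ) : Prop :=
  (∀ t ∈ Set.Ici (0:ℝ), HasDerivWithinAt f (f' t) (Set.Ici 0) t) ∧
  ∀ s ∈ Set.Ici (0:ℝ), ∀ t ∈ Set.Ici (0:ℝ), |f' s - f' t| ≤ L * |s - t|

/-- `η ∈ E_N`: measurable noise bounded by `N` on `[0,∞)`. -/
def IsEN (N : ℝ) (η : ℝ → ℝ) : Prop :=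
  Measurable η ∧ ∀ t ∈ Set.Ici (0:ℝ), |η t| ≤ N

/-- `f ∈ F_L^R`: member of `F_L` with `|f(0)| ≤ R` and `|ḟ(0)| ≤ R`. -/
def IsFLR (L R : ℝ) (f f' : ℝ → ℝ) : Prop :=
  IsFL L f f' ∧ |f 0| ≤ R ∧ |f' 0| ≤ R

/-- A differentiator is causal if its output at time `T` depends only on the
input on `[0, T]`. -/
def Causal (D : (ℝ → ℝ) → ℝ → ℝ) : Prop :=
  ∀ u₁ u₂ T, (∀ t ∈ Set.Icc (0:ℝ) T, u₁ t = u₂ t) → D u₁ T = D u₂ T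

/-- A sample-based differentiator with sampling period `Δ` is causal if its
output at step `k` depends only on the samples `u(jΔ)` for `j ≤ k`. -/
def SampleCausal (Δ : ℝ) (D : (ℝ → ℝ) → ℕ → ℝ) : Prop :=
  ∀ u₁ u₂ : ℝ → ℝ, ∀ k : ℕ,
    (∀ j : ℕ, j ≤ k → u₁ (j * Δ) = u₂ (j * Δ)) → D u₁ k = D u₂ k

theorem AddCircle.norm_add_half_period {p : ℝ} (hp : 0 < p) (u : AddCircle p) :
    ‖u + ((p / 2 : ℝ) : AddCircle p)‖ = p / 2 - ‖u‖ := by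
  have norm_coe_of_abs_le {y : ℝ} (hy : |y| ≤ p / 2) : ‖(y : AddCircle p)‖ = |y| := by
    rwa [norm_coe_eq_abs_iff p hp.ne', abs_of_pos hp]
  have coe_sub_period (y : ℝ) : ((y - p : ℝ) : AddCircle p) = y := by
    rw [coe_sub, coe_period, sub_zero]
  have := Fact.mk hp
  obtain ⟨b, ⟨hb0, hbp⟩, rfl⟩ := eq_coe_Ico u
  rw [← coe_add]
  rcases le_or_gt b (p / 2) with hb | hb
  · rw [← coe_sub_period (b + p / 2), norm_coe_of_abs_le (abs_le.2 ⟨by linarith, by linarith⟩),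
      norm_coe_of_abs_le (abs_le.2 ⟨by linarith, hb⟩), abs_of_nonpos (by linarith),
      abs_of_nonneg hb0]
    ring
  · rw [← coe_sub_period (b + p / 2), ← coe_sub_period b,
      norm_coe_of_abs_le (abs_le.2 ⟨by linarith, by linarith⟩),
      norm_coe_of_abs_le (abs_le.2 ⟨by linarith, by linarith⟩), abs_of_nonneg (by linarith),
      abs_of_nonpos (by linarith)]
    ring

theorem Function.Antiperiodic.periodic_abs {f : ℝ → ℝ} {c : ℝ} (hf : Function.Antiperiodic f c) :
    Function.Periodic (fun x => |f x|) c := fun x => by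
  simp only [hf x, abs_neg]

-- `‖(t : AddCircle (2 * Δ))‖` is the distance from `t` to `2Δℤ`.
noncomputable def triangleWave (Δ t : ℝ) : ℝ := Δ / 2 - ‖(t : AddCircle (2 * Δ))‖

theorem triangleWave_antiperiodic {Δ : ℝ} (hΔ : 0 < Δ) :
    Function.Antiperiodic (triangleWave Δ) Δ := fun t => by
  have h := AddCircle.norm_add_half_period (by positivity : 0 < 2 * Δ) (t : AddCircle (2 * Δ))
  rw [mul_div_cancel_left₀ Δ two_ne_zero, ← AddCircle.coe_add] at h
  simp only [triangleWave, h]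
  ring

theorem triangleWave_zero (Δ : ℝ) : triangleWave Δ 0 = Δ / 2 := by
  simp [triangleWave]

theorem abs_triangleWave_le {Δ : ℝ} (hΔ : 0 < Δ) (t : ℝ) : |triangleWave Δ t| ≤ Δ / 2 := by
  have h := AddCircle.norm_le_half_period (2 * Δ) (x := (t : AddCircle (2 * Δ))) (by positivity)
  rw [abs_of_pos (by positivity), mul_div_cancel_left₀ Δ two_ne_zero] at h
  have h0 := norm_nonneg (t : AddCircle (2 * Δ))
  unfold triangleWave
  exact abs_le.2 ⟨by linarith, by linarith⟩

theorem abs_triangleWave_sub_le (Δ s t : ℝ) :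
    |triangleWave Δ s - triangleWave Δ t| ≤ |s - t| := by
  calc |triangleWave Δ s - triangleWave Δ t|
      = |‖(t : AddCircle (2 * Δ))‖ - ‖(s : AddCircle (2 * Δ))‖| := by
        congr 1; unfold triangleWave; ring
    _ ≤ ‖(t : AddCircle (2 * Δ)) - s‖ := abs_norm_sub_norm_le _ _
    _ ≤ ‖t - s‖ := by rw [← AddCircle.coe_sub]; exact QuotientAddGroup.norm_mk_le_norm
    _ = |s - t| := by rw [Real.norm_eq_abs, abs_sub_comm]

theorem continuous_triangleWave (Δ : ℝ) : Continuous (triangleWave Δ) :=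
  continuous_const.sub (continuous_norm.comp (AddCircle.continuous_mk' _))

theorem abs_triangleWave_natCast_mul {Δ : ℝ} (hΔ : 0 < Δ) (j : ℕ) :
    |triangleWave Δ (j * Δ)| = Δ / 2 := by
  rw [(triangleWave_antiperiodic hΔ).periodic_abs.nat_mul_eq j, triangleWave_zero,
    abs_of_pos (by positivity)]

theorem integral_triangleWave {Δ : ℝ} (hΔ : 0 < Δ) : ∫ t in (0)..Δ, triangleWave Δ t = 0 := by
  have h : Set.EqOn (triangleWave Δ) (fun t => Δ / 2 - t) (Set.uIcc 0 Δ) := fun t ht => by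
    rw [Set.uIcc_of_le hΔ.le] at ht
    rw [triangleWave, (AddCircle.norm_coe_eq_abs_iff _ (by positivity)).2, abs_of_nonneg ht.1]
    rw [abs_of_nonneg ht.1, abs_of_pos (by positivity)]
    linarith [ht.2]
  rw [intervalIntegral.integral_congr h, intervalIntegral.integral_sub intervalIntegrable_const
    intervalIntegral.intervalIntegrable_id, intervalIntegral.integral_const, integral_id]
  simp only [sub_zero, smul_eq_mul]
  ring

theorem Function.Antiperiodic.primitive {f : ℝ → ℝ} {c : ℝ} (hf : Function.Antiperiodic f c)
    (hfi : ∀ a b, IntervalIntegrable f MeasureTheory.volume a b)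
    (h0 : ∫ x in (0)..c, f x = 0) :
    Function.Antiperiodic (fun t => ∫ x in (0)..t, f x) c := fun t => by
  have hshift : ∫ x in c..t + c, f x = -∫ x in (0)..t, f x :=
    calc ∫ x in c..t + c, f x = ∫ x in (0)..t, f (x + c) := by
          rw [intervalIntegral.integral_comp_add_right, zero_add]
      _ = -∫ x in (0)..t, f x := by simp only [hf _, intervalIntegral.integral_neg]
  simp only [← intervalIntegral.integral_add_adjacent_intervals (hfi 0 c) (hfi c (t + c)), h0,
    hshift, zero_add]

theorem abs_sub_le_of_hasDerivAt {f f' : ℝ → ℝ} {C : ℝ} (hf : ∀ x, HasDerivAt f (f' x) x)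
    (hC : ∀ x, |f' x| ≤ C) (s t : ℝ) : |f s - f t| ≤ C * |s - t| :=
  Convex.norm_image_sub_le_of_norm_hasDerivWithin_le (fun x _ => (hf x).hasDerivWithinAt)
    (fun x _ => hC x) convex_univ (Set.mem_univ t) (Set.mem_univ s)

theorem abs_mul_sub_mul_le {f g : ℝ → ℝ} {Kf Kg Bf Bg : ℝ}
    (hf : ∀ s t, |f s - f t| ≤ Kf * |s - t|) (hg : ∀ s t, |g s - g t| ≤ Kg * |s - t|)
    (hfB : ∀ t, |f t| ≤ Bf) (hgB : ∀ t, |g t| ≤ Bg) (s t : ℝ) :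
    |f s * g s - f t * g t| ≤ (Kf * Bg + Bf * Kg) * |s - t| :=
  calc |f s * g s - f t * g t| = |(f s - f t) * g s + f t * (g s - g t)| := by ring_nf
    _ ≤ |f s - f t| * |g s| + |f t| * |g s - g t| := by
        rw [← abs_mul, ← abs_mul]; exact abs_add_le _ _
    _ ≤ (Kf * |s - t|) * Bg + Bf * (Kg * |s - t|) :=
        add_le_add (mul_le_mul (hf s t) (hgB s) (abs_nonneg _) ((abs_nonneg _).trans (hf s t)))
          (mul_le_mul (hfB t) (hg s t) (abs_nonneg _) ((abs_nonneg _).trans (hfB t)))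
    _ = (Kf * Bg + Bf * Kg) * |s - t| := by ring

-- `‖(t : AddCircle (2 * Δ))‖` is the distance from `t` to `2Δℤ`.
noncomputable def triangleWaveIntegral (Δ t : ℝ) : ℝ := ∫ x in (0)..t, triangleWave Δ x

theorem hasDerivAt_triangleWaveIntegral (Δ t : ℝ) :
    HasDerivAt (triangleWaveIntegral Δ) (triangleWave Δ t) t :=
  (continuous_triangleWave Δ).integral_hasStrictDerivAt 0 t |>.hasDerivAt

theorem triangleWaveIntegral_antiperiodic {Δ : ℝ} (hΔ : 0 < Δ) :
    Function.Antiperiodic (triangleWaveIntegral Δ) Δ :=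
  (triangleWave_antiperiodic hΔ).primitive
    (fun _ _ => (continuous_triangleWave Δ).intervalIntegrable _ _) (integral_triangleWave hΔ)

theorem triangleWaveIntegral_natCast_mul {Δ : ℝ} (hΔ : 0 < Δ) (j : ℕ) :
    triangleWaveIntegral Δ (j * Δ) = 0 :=
  (triangleWaveIntegral_antiperiodic hΔ).nat_mul_eq_of_eq_zero intervalIntegral.integral_same j

theorem abs_triangleWaveIntegral_sub_le {Δ : ℝ} (hΔ : 0 < Δ) (s t : ℝ) :
    |triangleWaveIntegral Δ s - triangleWaveIntegral Δ t| ≤ Δ / 2 * |s - t| :=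
  abs_sub_le_of_hasDerivAt (hasDerivAt_triangleWaveIntegral Δ) (abs_triangleWave_le hΔ) s t

theorem abs_triangleWaveIntegral_le {Δ : ℝ} (hΔ : 0 < Δ) (t : ℝ) :
    |triangleWaveIntegral Δ t| ≤ Δ ^ 2 / 2 := by
  obtain ⟨y, ⟨hy0, hyΔ⟩, hy⟩ :=
    (triangleWaveIntegral_antiperiodic hΔ).periodic_abs.exists_mem_Ico₀ hΔ t
  have h := abs_triangleWaveIntegral_sub_le hΔ y 0
  rw [show triangleWaveIntegral Δ 0 = 0 from intervalIntegral.integral_same, sub_zero, sub_zero,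
    abs_of_nonneg hy0] at h
  rw [hy]
  nlinarith

noncomputable def ramp (x : ℝ) : ℝ := 1 - Real.exp (-x ^ 2)

noncomputable def rampDeriv (x : ℝ) : ℝ := 2 * x * Real.exp (-x ^ 2)

theorem hasDerivAt_neg_sq (x : ℝ) : HasDerivAt (fun y : ℝ => -y ^ 2) (-(2 * x)) x := by
  simpa using (hasDerivAt_pow 2 x).fun_neg

theorem hasDerivAt_ramp (x : ℝ) : HasDerivAt ramp (rampDeriv x) x :=
  ((hasDerivAt_neg_sq x).exp.const_sub 1).congr_deriv (by unfold rampDeriv; ring)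

theorem hasDerivAt_rampDeriv (x : ℝ) :
    HasDerivAt rampDeriv ((2 - 4 * x ^ 2) * Real.exp (-x ^ 2)) x :=
  (((hasDerivAt_id x).const_mul 2).mul (hasDerivAt_neg_sq x).exp).congr_deriv
    (by simp only [id]; ring)

theorem ramp_zero : ramp 0 = 0 := by simp [ramp]

theorem rampDeriv_zero : rampDeriv 0 = 0 := by simp [rampDeriv]

theorem ramp_nonneg (x : ℝ) : 0 ≤ ramp x := by
  have : Real.exp (-x ^ 2) ≤ 1 := Real.exp_le_one_iff.2 (by nlinarith [sq_nonneg x])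
  unfold ramp; linarith

theorem ramp_le_one (x : ℝ) : ramp x ≤ 1 := by
  unfold ramp; linarith [Real.exp_pos (-x ^ 2)]

theorem one_add_sq_le_exp_sq (x : ℝ) : 1 + x ^ 2 ≤ Real.exp (x ^ 2) := by
  linarith [Real.add_one_le_exp (x ^ 2)]

theorem abs_rampDeriv_le_one (x : ℝ) : |rampDeriv x| ≤ 1 := by
  have h : 2 * |x| ≤ Real.exp (x ^ 2) := by
    nlinarith [one_add_sq_le_exp_sq x, sq_abs x, sq_nonneg (|x| - 1)]
  rw [rampDeriv, abs_mul, abs_mul, abs_two, Real.abs_exp, Real.exp_neg,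
    ← div_eq_mul_inv, div_le_one (Real.exp_pos _)]
  exact h

theorem abs_rampDeriv_sub_le (x y : ℝ) : |rampDeriv x - rampDeriv y| ≤ 4 * |x - y| := by
  refine abs_sub_le_of_hasDerivAt hasDerivAt_rampDeriv (fun x => ?_) x y
  rw [abs_mul, Real.abs_exp, Real.exp_neg, ← div_eq_mul_inv,
    div_le_iff₀ (Real.exp_pos _)]
  have : |2 - 4 * x ^ 2| ≤ 4 * (1 + x ^ 2) := abs_le.2 ⟨by nlinarith, by nlinarith⟩
  linarith [one_add_sq_le_exp_sq x]

theorem tendsto_ramp_atTop : Tendsto ramp atTop (𝓝 1) := by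
  have h : Tendsto (fun x : ℝ => Real.exp (-x ^ 2)) atTop (𝓝 0) :=
    Real.tendsto_exp_neg_atTop_nhds_zero.comp (tendsto_pow_atTop two_ne_zero)
  rw [← sub_zero 1]
  exact h.const_sub 1

theorem abs_ramp_sub_le (x y : ℝ) : |ramp x - ramp y| ≤ |x - y| := by
  simpa using abs_sub_le_of_hasDerivAt hasDerivAt_ramp abs_rampDeriv_le_one x y

noncomputable def rampedWave (σ Δ t : ℝ) : ℝ := ramp (σ * t) * triangleWaveIntegral Δ t

noncomputable def rampedWaveDeriv (σ Δ t : ℝ) : ℝ :=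
  σ * rampDeriv (σ * t) * triangleWaveIntegral Δ t + ramp (σ * t) * triangleWave Δ t

theorem hasDerivAt_rampedWave (σ Δ t : ℝ) :
    HasDerivAt (rampedWave σ Δ) (rampedWaveDeriv σ Δ t) t :=
  (((hasDerivAt_ramp (σ * t)).comp t ((hasDerivAt_id t).const_mul σ)).mul
    (hasDerivAt_triangleWaveIntegral Δ t)).congr_deriv
      (by unfold rampedWaveDeriv; simp only [Function.comp_apply, mul_one]; ring)

theorem rampedWave_natCast_mul (σ : ℝ) {Δ : ℝ} (hΔ : 0 < Δ) (j : ℕ) :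
    rampedWave σ Δ (j * Δ) = 0 := by
  rw [rampedWave, triangleWaveIntegral_natCast_mul hΔ, mul_zero]

theorem rampedWaveDeriv_zero (σ Δ : ℝ) : rampedWaveDeriv σ Δ 0 = 0 := by
  simp [rampedWaveDeriv, ramp_zero, rampDeriv_zero]

theorem abs_rampedWaveDeriv_natCast_mul (σ : ℝ) {Δ : ℝ} (hΔ : 0 < Δ) (j : ℕ) :
    |rampedWaveDeriv σ Δ (j * Δ)| = ramp (σ * (j * Δ)) * (Δ / 2) := by
  rw [rampedWaveDeriv, triangleWaveIntegral_natCast_mul hΔ, mul_zero, zero_add, abs_mul,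
    abs_triangleWave_natCast_mul hΔ, abs_of_nonneg (ramp_nonneg _)]

theorem abs_rampedWaveDeriv_sub_le {σ Δ : ℝ} (hσ : 0 ≤ σ) (hΔ : 0 < Δ) (s t : ℝ) :
    |rampedWaveDeriv σ Δ s - rampedWaveDeriv σ Δ t| ≤
      (1 + σ * Δ + 2 * (σ * Δ) ^ 2) * |s - t| := by
  have hramp : ∀ s t, |ramp (σ * s) - ramp (σ * t)| ≤ σ * |s - t| := fun s t => by
    simpa [← mul_sub, abs_mul, abs_of_nonneg hσ] using abs_ramp_sub_le (σ * s) (σ * t)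
  have hrampDeriv :
      ∀ s t, |σ * rampDeriv (σ * s) - σ * rampDeriv (σ * t)| ≤ 4 * σ ^ 2 * |s - t| := fun s t => by
      have h := abs_rampDeriv_sub_le (σ * s) (σ * t)
      rw [← mul_sub, abs_mul, abs_of_nonneg hσ] at h
      rw [← mul_sub, abs_mul, abs_of_nonneg hσ]
      calc σ * |rampDeriv (σ * s) - rampDeriv (σ * t)| ≤ σ * (4 * (σ * |s - t|)) :=
            mul_le_mul_of_nonneg_left h hσ
        _ = 4 * σ ^ 2 * |s - t| := by ring
  have h₁ := abs_mul_sub_mul_le hrampDeriv (abs_triangleWaveIntegral_sub_le hΔ)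
    (fun t => by simpa [abs_mul, abs_of_nonneg hσ] using
      mul_le_mul_of_nonneg_left (abs_rampDeriv_le_one (σ * t)) hσ)
    (abs_triangleWaveIntegral_le hΔ) s t
  have h₂ := abs_mul_sub_mul_le hramp
    (fun s t => (abs_triangleWave_sub_le Δ s t).trans_eq (one_mul _).symm)
    (fun t => abs_le.2 ⟨by linarith [ramp_nonneg (σ * t)], ramp_le_one (σ * t)⟩)
    (abs_triangleWave_le hΔ) s t
  calc |rampedWaveDeriv σ Δ s - rampedWaveDeriv σ Δ t|
      ≤ |σ * rampDeriv (σ * s) * triangleWaveIntegral Δ s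
            - σ * rampDeriv (σ * t) * triangleWaveIntegral Δ t|
        + |ramp (σ * s) * triangleWave Δ s - ramp (σ * t) * triangleWave Δ t| := by
        unfold rampedWaveDeriv
        exact (abs_add_le _ _).trans_eq' (by ring_nf)
    _ ≤ (1 + σ * Δ + 2 * (σ * Δ) ^ 2) * |s - t| := by nlinarith

theorem IsFL.of_hasDerivAt {L : ℝ} {f f' : ℝ → ℝ} (hf : ∀ t, HasDerivAt f (f' t) t)
    (hf' : ∀ s t, |f' s - f' t| ≤ L * |s - t|) : IsFL L f f' :=
  ⟨fun t _ => (hf t).hasDerivWithinAt, fun s _ t _ => hf' s t⟩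

theorem IsFLR.neg {L R : ℝ} {f f' : ℝ → ℝ} (h : IsFLR L R f f') :
    IsFLR L R (fun t => -f t) (fun t => -f' t) := by
  obtain ⟨⟨hderiv, hlip⟩, h0, h0'⟩ := h
  refine ⟨⟨fun t ht => (hderiv t ht).neg, fun s hs t ht => ?_⟩, by simpa using h0,
    by simpa using h0'⟩
  rw [show -f' s - -f' t = -(f' s - f' t) by ring, abs_neg]
  exact hlip s hs t ht

theorem isFLR_rampedWave {L σ Δ : ℝ} (hL : 0 ≤ L) (hσ : 0 ≤ σ) (hΔ : 0 < Δ) :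
    IsFLR L 0 (fun t => L / (1 + σ * Δ + 2 * (σ * Δ) ^ 2) * rampedWave σ Δ t)
      (fun t => L / (1 + σ * Δ + 2 * (σ * Δ) ^ 2) * rampedWaveDeriv σ Δ t) := by
  set K := 1 + σ * Δ + 2 * (σ * Δ) ^ 2
  have hK : 0 < K := by positivity
  refine ⟨IsFL.of_hasDerivAt (fun t => (hasDerivAt_rampedWave σ Δ t).const_mul _) fun s t => ?_,
    ?_, ?_⟩
  · rw [← mul_sub, abs_mul, abs_of_nonneg (by positivity)]
    calc L / K * |rampedWaveDeriv σ Δ s - rampedWaveDeriv σ Δ t| ≤ L / K * (K * |s - t|) :=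
          mul_le_mul_of_nonneg_left (abs_rampedWaveDeriv_sub_le hσ hΔ s t) (by positivity)
      _ = L * |s - t| := by field_simp
  · simp [show rampedWave σ Δ 0 = 0 by simpa using rampedWave_natCast_mul σ hΔ 0]
  · simp [rampedWaveDeriv_zero]

theorem exists_isFLR_samples_eq_zero_abs_deriv_ge {L Δ ε : ℝ} (hL : 0 ≤ L) (hΔ : 0 < Δ)
    (hε : 0 < ε) (k : ℕ) :
    ∃ f f' : ℝ → ℝ, IsFLR L 0 f f' ∧ (∀ j : ℕ, f (j * Δ) = 0) ∧
      ∃ ℓ : ℕ, k ≤ ℓ ∧ (1 - ε) * L * Δ / 2 ≤ |f' (ℓ * Δ)| := by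
  have hinvK : Tendsto (fun σ => 1 / (1 + σ * Δ + 2 * (σ * Δ) ^ 2)) (𝓝[>] 0) (𝓝 1) := by
    have h : Continuous fun σ : ℝ => 1 / (1 + σ * Δ + 2 * (σ * Δ) ^ 2) :=
      continuous_const.div (by fun_prop) fun σ => by nlinarith [sq_nonneg (σ * Δ + 1 / 4)]
    simpa using (h.tendsto 0).mono_left nhdsWithin_le_nhds
  obtain ⟨σ, hσK, hσ : 0 < σ⟩ :=
    ((hinvK.eventually (lt_mem_nhds (by linarith : 1 - ε < 1))).and self_mem_nhdsWithin).exists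
  set K := 1 + σ * Δ + 2 * (σ * Δ) ^ 2
  have hK : 0 < K := by positivity
  have hramp : Tendsto (fun ℓ : ℕ => ramp (σ * (ℓ * Δ)) / K) atTop (𝓝 (1 / K)) :=
    (tendsto_ramp_atTop.comp ((tendsto_natCast_atTop_atTop.atTop_mul_const hΔ).const_mul_atTop
      hσ)).div_const K
  obtain ⟨ℓ, hℓ, hkℓ⟩ :=
    ((hramp.eventually (lt_mem_nhds hσK)).and (eventually_ge_atTop k)).exists
  refine ⟨_, _, isFLR_rampedWave hL hσ.le hΔ,
    fun j => by simp [rampedWave_natCast_mul σ hΔ j], ℓ, hkℓ, ?_⟩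
  rw [abs_mul, abs_rampedWaveDeriv_natCast_mul σ hΔ, abs_of_nonneg (by positivity)]
  calc (1 - ε) * L * Δ / 2 ≤ ramp (σ * (ℓ * Δ)) / K * (L * Δ / 2) := by
        nlinarith [mul_nonneg hL hΔ.le]
    _ = L / K * (ramp (σ * (ℓ * Δ)) * (Δ / 2)) := by ring

theorem SampleCausal.exists_abs_sub_ge {Δ : ℝ} {D : (ℝ → ℝ) → ℕ → ℝ} (hD : SampleCausal Δ D)
    {L R : ℝ} {f f' : ℝ → ℝ} (hf : IsFLR L R f f') {ℓ : ℕ} (hzero : ∀ j ≤ ℓ, f (j * Δ) = 0) :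
    ∃ g g' : ℝ → ℝ, IsFLR L R g g' ∧ |f' (ℓ * Δ)| ≤ |g' (ℓ * Δ) - D g ℓ| := by
  have hD' : D (fun t => -f t) ℓ = D f ℓ := hD _ _ ℓ fun j hj => by simp [hzero j hj]
  by_cases h : |f' (ℓ * Δ)| ≤ |f' (ℓ * Δ) - D f ℓ|
  · exact ⟨f, f', hf, h⟩
  refine ⟨_, _, hf.neg, ?_⟩
  rw [hD']
  have h2 := abs_add_le (f' (ℓ * Δ) - D f ℓ) (-(-f' (ℓ * Δ) - D f ℓ))
  rw [abs_neg, show f' (ℓ * Δ) - D f ℓ + -(-f' (ℓ * Δ) - D f ℓ) = 2 * f' (ℓ * Δ) by ring,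
    abs_mul, abs_two] at h2
  linarith

theorem stmt18_general (L Δ : ℝ) (hL : 0 ≤ L) (hΔ : 0 < Δ)
    (D : (ℝ → ℝ) → ℕ → ℝ) (hD : SampleCausal Δ D) :
    ∀ k : ℕ, 1 ≤ k → ∀ ε : ℝ, 0 < ε →
      ∃ f f' : ℝ → ℝ, IsFLR L 0 f f' ∧ ∃ ℓ : ℕ, k ≤ ℓ ∧
        (1 - ε) * L * Δ / 2 ≤ |f' (ℓ * Δ) - D f ℓ| := by
  intro k _ ε hε
  obtain ⟨f, f', hf, hzero, ℓ, hkℓ, hℓ⟩ :=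
    exists_isFLR_samples_eq_zero_abs_deriv_ge hL hΔ hε k
  obtain ⟨g, g', hg, hgℓ⟩ := hD.exists_abs_sub_ge hf fun j _ => hzero j
  exact ⟨g, g', hg, ℓ, hkℓ, hℓ.trans hgℓ⟩

theorem stmt18 (L N R Δ : ℝ) (hL : 0 ≤ L) (hN : 0 ≤ N) (hR : 0 ≤ R) (hΔ : 0 < Δ)
    (D : (ℝ → ℝ) → ℕ → ℝ) (hD : SampleCausal Δ D) :
    ∀ k : ℕ, 1 ≤ k → ∀ ε : ℝ, 0 < ε →
      ∃ f f' : ℝ → ℝ, IsFLR L 0 f f' ∧ ∃ ℓ : ℕ, k ≤ ℓ ∧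
        (1 - ε) * L * Δ / 2 ≤ |f' (ℓ * Δ) - D f ℓ| :=
  stmt18_general L Δ hL hΔ D hD
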